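/- arXiv:1604.02172 — 2 statements merged into one kernel-verified Lean document; each statement's English description precedes it below -/
import Mathlib

section
/- Let v ∈ ℝⁿ and let A be the (n+1)×(n+1) real symmetric block matrix A = [[I, v], [vᵀ, 1]], where I is the n×n identity matrix. Then A is SPN if and only if ‖v₋‖ ≤ 1, where v₋ = max(−v, 0) is the entrywise negative part of v and ‖·‖ is the Euclidean norm. -/
open Matrix

/-- A real symmetric matrix `A` is *copositive* if `xᵀAx ≥ 0` for every
entrywise nonnegative vector `x`. -/
def Copositive {ι : Type*} [Fintype ι] (A : Matrix ι ι ℝ) : Prop :=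
  ∀ x : ι → ℝ, (∀ i, 0 ≤ x i) → 0 ≤ x ⬝ᵥ A.mulVec x

/-- A real symmetric matrix is *SPN* if it is the sum of a positive semidefinite
matrix and a symmetric entrywise nonnegative matrix. -/
def IsSPN {ι : Type*} [Fintype ι] (A : Matrix ι ι ℝ) : Prop :=
  ∃ P N : Matrix ι ι ℝ, P.PosSemidef ∧ N.IsSymm ∧ (∀ i j, 0 ≤ N i j) ∧ A = P + N

/-!
Write `v = v⁺ - v⁻`. If `v⁻ ⬝ᵥ v⁻ ≤ 1`, the bordered matrix of `-v⁻` is positive semidefinite,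
its quadratic form at `(y, t)` being `‖y - t v⁻‖² + t² (1 - ‖v⁻‖²)`, and adding the nonnegative border
built from `v⁺` gives the bordered matrix of `v`. Conversely, an SPN matrix is copositive, and
since `v ⬝ᵥ v⁻ = -‖v⁻‖²`, its quadratic form at the nonnegative vector `(v⁻, s)` with
`s = ‖v⁻‖²` equals `s (1 - s)`, which forces `s ≤ 1`.
-/

variable {ι : Type*}

theorem IsSPN.copositive [Fintype ι] {A : Matrix ι ι ℝ} (hA : IsSPN A) : Copositive A := by
  obtain ⟨P, N, hP, -, hN, rfl⟩ := hA
  intro x hx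
  rw [add_mulVec, dotProduct_add]
  refine add_nonneg (by simpa using hP.dotProduct_mulVec_nonneg x) ?_
  exact Finset.sum_nonneg fun i _ => mul_nonneg (hx i) <|
    Finset.sum_nonneg fun j _ => mul_nonneg (hN i j) (hx j)

theorem dotProduct_negPart [Fintype ι] {α : Type*} [CommRing α] [LinearOrder α]
    [IsOrderedRing α] (v : ι → α) : v ⬝ᵥ v⁻ = -(v⁻ ⬝ᵥ v⁻) := by
  rw [← dotProduct_neg]
  refine Finset.sum_congr rfl fun i _ => ?_
  rcases le_total (v i) 0 with h | h
  · simp [negPart_eq_neg.2 h]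
  · simp [negPart_eq_zero.2 h]

variable [DecidableEq ι]

def borderedIdentity (v : ι → ℝ) : Matrix (ι ⊕ Fin 1) (ι ⊕ Fin 1) ℝ :=
  fromBlocks 1 (replicateCol (Fin 1) v) (replicateRow (Fin 1) v) 1

theorem borderedIdentity_eq_add (v : ι → ℝ) :
    borderedIdentity v = borderedIdentity (-v⁻) +
      fromBlocks 0 (replicateCol (Fin 1) v⁺) (replicateRow (Fin 1) v⁺) 0 := by
  have hv : v = -v⁻ + v⁺ := by rw [neg_add_eq_sub, posPart_sub_negPart]
  conv_lhs => rw [hv]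
  simp only [borderedIdentity, fromBlocks_add, add_zero]
  ext (i | i) (j | j) <;> simp

variable [Fintype ι]

theorem dotProduct_borderedIdentity_mulVec (v : ι → ℝ) (x : ι ⊕ Fin 1 → ℝ) :
    x ⬝ᵥ borderedIdentity v *ᵥ x =
      (x ∘ Sum.inl) ⬝ᵥ (x ∘ Sum.inl) + 2 * x (Sum.inr 0) * (v ⬝ᵥ (x ∘ Sum.inl))
        + x (Sum.inr 0) ^ 2 := by
  have hcol : replicateCol (Fin 1) v *ᵥ (x ∘ Sum.inr) = x (Sum.inr 0) • v := by
    ext; simp [mulVec, dotProduct, mul_comm]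
  simp only [borderedIdentity, fromBlocks_mulVec, dotProduct_block, one_mulVec,
    Sum.elim_comp_inl, Sum.elim_comp_inr, hcol, replicateRow_mulVec_eq_const]
  have hfin (z w : Fin 1 → ℝ) : z ⬝ᵥ w = z 0 * w 0 := Fin.sum_univ_one _
  simp only [dotProduct_add, dotProduct_smul, smul_eq_mul, dotProduct_comm _ v, hfin,
    Pi.add_apply, Function.comp_apply, Function.const_apply]
  ring

theorem posSemidef_borderedIdentity {v : ι → ℝ} (hv : v ⬝ᵥ v ≤ 1) :
    (borderedIdentity v).PosSemidef := by
  rw [posSemidef_iff_dotProduct_mulVec]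
  refine ⟨.fromBlocks isHermitian_one ?_ isHermitian_one, fun x => ?_⟩
  · ext; simp
  set y := x ∘ Sum.inl
  set t := x (Sum.inr 0)
  have h : x ⬝ᵥ borderedIdentity v *ᵥ x =
      (y + t • v) ⬝ᵥ (y + t • v) + t ^ 2 * (1 - v ⬝ᵥ v) := by
    rw [dotProduct_borderedIdentity_mulVec]
    simp only [dotProduct_add, add_dotProduct, dotProduct_smul, smul_dotProduct, smul_eq_mul,
      dotProduct_comm y v]
    ring
  rw [star_trivial, h]
  exact add_nonneg (by simpa using dotProduct_self_star_nonneg (y + t • v))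
    (mul_nonneg (sq_nonneg t) (sub_nonneg.2 hv))

theorem isSPN_borderedIdentity {v : ι → ℝ} (hv : v⁻ ⬝ᵥ v⁻ ≤ 1) :
    IsSPN (borderedIdentity v) := by
  refine ⟨_, _, posSemidef_borderedIdentity (by rwa [neg_dotProduct_neg]), ?_, ?_,
    borderedIdentity_eq_add v⟩
  · ext (i | i) (j | j) <;> simp
  · rintro (i | i) (j | j) <;> simp [posPart_nonneg]

theorem Copositive.negPart_dotProduct_le_one {v : ι → ℝ}
    (h : Copositive (borderedIdentity v)) : v⁻ ⬝ᵥ v⁻ ≤ 1 := by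
  set s := v⁻ ⬝ᵥ v⁻
  have hs : 0 ≤ s := by simpa using dotProduct_self_star_nonneg v⁻
  have := h (Sum.elim v⁻ fun _ => s) (by rintro (i | i) <;> simp [hs, negPart_nonneg])
  rw [dotProduct_borderedIdentity_mulVec] at this
  simp only [Sum.elim_comp_inl, Sum.elim_inr, dotProduct_negPart] at this
  nlinarith

/-- The bordered matrix `A = [[I, v], [vᵀ, 1]]` is SPN if and only if
`‖v₋‖ ≤ 1`, where `v₋` is the entrywise negative part of `v`. -/
theorem borderedIdentity_isSPN_iff_negPart_norm_le_one
    (n : ℕ) (v : Fin n → ℝ) :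
    IsSPN (Matrix.fromBlocks (1 : Matrix (Fin n) (Fin n) ℝ)
      (Matrix.replicateCol (Fin 1) v) (Matrix.replicateRow (Fin 1) v)
      (1 : Matrix (Fin 1) (Fin 1) ℝ)) ↔
    Real.sqrt (∑ i, max (-(v i)) 0 ^ 2) ≤ 1 := by
  have hnorm : ∑ i, max (-(v i)) 0 ^ 2 = v⁻ ⬝ᵥ v⁻ := by
    simp [dotProduct, sq, negPart_def]
  rw [hnorm, Real.sqrt_le_one]
  exact ⟨fun h => h.copositive.negPart_dotProduct_le_one, isSPN_borderedIdentity⟩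
end

section
/- For every n ≥ 3, the cycle graph C_n on n vertices (vertices {1,…,n} with i adjacent to j if and only if i and j differ by 1 modulo n) is an SPN graph. -/
open Matrix

/-- The graph `G(A)` of a symmetric real matrix: `i ≠ j` are adjacent iff `A i j ≠ 0`. -/
def matrixGraph {ι : Type*} (A : Matrix ι ι ℝ) : SimpleGraph ι where
  Adj i j := i ≠ j ∧ (A i j ≠ 0 ∨ A j i ≠ 0)
  symm := by
    constructor
    intro i j h
    exact ⟨h.1.symm, h.2.symm⟩
  loopless := by
    constructor
    intro i h
    exact h.1 rfl

/-- A graph `G` is an *SPN graph* if every copositive symmetric real matrix whose graph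
is isomorphic to `G` is SPN. -/
def IsSPNGraph {V : Type*} [Fintype V] (G : SimpleGraph V) : Prop :=
  ∀ (n : ℕ) (A : Matrix (Fin n) (Fin n) ℝ), A.IsSymm → Copositive A →
    Nonempty (matrixGraph A ≃g G) → IsSPN A

/-- The cycle graph on `Fin n`: `i` and `j` are adjacent iff they differ by `1`
modulo `n`. -/
def cycleGraph (n : ℕ) : SimpleGraph (Fin n) where
  Adj i j := i ≠ j ∧ ((i.val + 1) % n = j.val ∨ (j.val + 1) % n = i.val)
  symm := by
    constructor
    intro i j h
    exact ⟨h.1.symm, h.2.symm⟩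
  loopless := by
    constructor
    intro i h
    exact h.1 rfl

/-!
If no off-diagonal entry of `A` is positive, copositivity alone makes `A` positive semidefinite.
Otherwise rotate the cycle so that a positive entry sits on the closing edge `{0, n - 1}` and
write `A = B + c • E`, with `B` tridiagonal and `E` the `0/1` matrix of that edge. A copositive
tridiagonal `B` is SPN, and then so is `A`. If `B` is not copositive, every path edge of `B` is
negative; let `d ∈ (0, c]` be least with `B + d • E` copositive. For `t < d` the minimiser `x` of
the quadratic form of `B + t • E` on the simplex is strictly positive, so `(B + t • E) x = μ • 1`
with `μ < 0`; in the limit `t ↑ d` this gives a nonnegative null vector `z` of `B + d • E`. Along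
the negative path zeros of `z` spread, so `z` vanishes at most at one vertex, and adding multiples
of `z` to an arbitrary vector shows that `B + d • E` is positive semidefinite. Thus
`A = (B + d • E) + (c - d) • E` is SPN.
-/

open Finset Filter Topology

section General

variable {ι κ : Type*} [Fintype ι]

theorem dotProduct_mulVec_eq_sum (M : Matrix ι ι ℝ) (x : ι → ℝ) :
    x ⬝ᵥ M *ᵥ x = ∑ k, ∑ l, x k * M k l * x l := by
  simp only [dotProduct, mulVec, Finset.mul_sum, mul_assoc]

theorem smul_dotProduct_mulVec_smul (M : Matrix ι ι ℝ) (t : ℝ) (x : ι → ℝ) :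
    (t • x) ⬝ᵥ M *ᵥ (t • x) = t ^ 2 * (x ⬝ᵥ M *ᵥ x) := by
  rw [mulVec_smul, smul_dotProduct, dotProduct_smul, smul_eq_mul, smul_eq_mul]; ring

theorem copositive_iff_stdSimplex {M : Matrix ι ι ℝ} :
    Copositive M ↔ ∀ x ∈ stdSimplex ℝ ι, 0 ≤ x ⬝ᵥ M *ᵥ x := by
  refine ⟨fun h x hx => h x hx.1, fun h x hx => ?_⟩
  rcases (Finset.sum_nonneg fun i _ => hx i).eq_or_lt with hs | hs
  · obtain rfl : x = 0 :=
      funext fun i => (sum_eq_zero_iff_of_nonneg fun i _ => hx i).1 hs.symm i (mem_univ i)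
    simp
  · have hmem : (∑ i, x i)⁻¹ • x ∈ stdSimplex ℝ ι :=
      ⟨fun i => smul_nonneg (inv_nonneg.2 hs.le) (hx i), by
        simp only [Pi.smul_apply, smul_eq_mul, ← Finset.mul_sum, inv_mul_cancel₀ hs.ne']⟩
    have := h _ hmem
    rw [smul_dotProduct_mulVec_smul] at this
    exact nonneg_of_mul_nonneg_right this (by positivity)

theorem isClosed_setOf_copositive : IsClosed {M : Matrix ι ι ℝ | Copositive M} := by
  simp only [Copositive, Set.ofPred_forall]
  exact isClosed_iInter fun x => isClosed_iInter fun _ =>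
    isClosed_le continuous_const
      (continuous_const.dotProduct (continuous_id.matrix_mulVec continuous_const))

theorem Copositive.submatrix {A : Matrix ι ι ℝ} (hA : Copositive A) [Fintype κ] (e : κ ≃ ι) :
    Copositive (A.submatrix e e) := by
  intro x hx
  rw [submatrix_mulVec_equiv, ← comp_equiv_symm_dotProduct]
  exact hA _ fun i => hx _

theorem IsSPN.submatrix {A : Matrix ι ι ℝ} (hA : IsSPN A) [Fintype κ] (f : κ → ι) :
    IsSPN (A.submatrix f f) := by
  obtain ⟨P, N, hP, hN, hN0, rfl⟩ := hA
  exact ⟨P.submatrix f f, N.submatrix f f, hP.submatrix f, hN.submatrix f, fun i j => hN0 _ _,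
    by rw [submatrix_add]; rfl⟩

theorem IsSPN.add_nonneg {A N : Matrix ι ι ℝ} (hA : IsSPN A) (hNs : N.IsSymm)
    (hN : ∀ i j, 0 ≤ N i j) : IsSPN (A + N) := by
  obtain ⟨P, N', hP, hN's, hN', rfl⟩ := hA
  exact ⟨P, N' + N, hP, hN's.add hNs, fun i j => _root_.add_nonneg (hN' i j) (hN i j),
    add_assoc _ _ _⟩

theorem Matrix.PosSemidef.isSPN {P : Matrix ι ι ℝ} (hP : P.PosSemidef) : IsSPN P :=
  ⟨P, 0, hP, isSymm_zero, fun _ _ => le_rfl, (add_zero P).symm⟩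

theorem eq_zero_of_mulVec_apply_eq_zero {M : Matrix ι ι ℝ} {z : ι → ℝ} {i : ι}
    (hMz : (M *ᵥ z) i = 0) (hle : ∀ j, M i j * z j ≤ 0) {j : ι} (hj : M i j < 0) : z j = 0 :=
  (mul_eq_zero.1 ((sum_eq_zero_iff_of_nonpos fun j _ => hle j).1 hMz j (mem_univ j))).resolve_left
    hj.ne

theorem isSPNGraph_of_forall {V : Type*} [Fintype V] {G : SimpleGraph V}
    (h : ∀ A : Matrix V V ℝ, A.IsSymm → Copositive A → (∀ i j, i ≠ j → A i j ≠ 0 → G.Adj i j) →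
      IsSPN A) :
    IsSPNGraph G := by
  rintro k A hs hc ⟨e⟩
  have hA := h (A.submatrix e.symm e.symm) (hs.submatrix _) (hc.submatrix e.symm.toEquiv)
    fun i j hij hA => e.symm.map_adj_iff.1 ⟨e.symm.injective.ne hij, Or.inl hA⟩
  simpa using hA.submatrix e

end General

section Blocks

variable {ι α : Type*} [DecidableEq α]

def blockMask (r : ι → α) (A : Matrix ι ι ℝ) : Matrix ι ι ℝ :=
  of fun k l => if r k = r l then A k l else 0

theorem Matrix.IsSymm.blockMask {A : Matrix ι ι ℝ} (hA : A.IsSymm) (r : ι → α) :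
    (blockMask r A).IsSymm := by
  ext k l
  simp only [_root_.blockMask, transpose_apply, of_apply, eq_comm, hA.apply k l]

variable [Fintype ι]

theorem copositive_blockMask {A : Matrix ι ι ℝ} (hA : Copositive A) (r : ι → α) :
    Copositive (blockMask r A) := by
  intro x hx
  let y : α → ι → ℝ := fun a k => if r k = a then x k else 0
  have hsum : x ⬝ᵥ blockMask r A *ᵥ x = ∑ a ∈ univ.image r, y a ⬝ᵥ A *ᵥ y a := by
    simp only [dotProduct_mulVec_eq_sum, y]
    symm
    rw [Finset.sum_comm]
    refine sum_congr rfl fun k _ => ?_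
    rw [Finset.sum_comm]
    refine sum_congr rfl fun l _ => ?_
    simp only [blockMask, of_apply, ite_mul, zero_mul, mul_ite, mul_zero]
    rw [Finset.sum_ite_eq, if_pos (mem_image_of_mem r (mem_univ l))]
  rw [hsum]
  exact sum_nonneg fun a _ => hA _ fun k => by dsimp only [y]; split_ifs <;> simp [hx k]

theorem Copositive.dotProduct_mulVec_nonneg_of_blockMask_eq {A M : Matrix ι ι ℝ}
    (hA : Copositive A) {r : ι → α} (hM : blockMask r M = blockMask r A) {x : ι → ℝ}
    (hx : ∀ i, 0 ≤ x i) (hoff : ∀ k l, r k ≠ r l → 0 ≤ x k * M k l * x l) :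
    0 ≤ x ⬝ᵥ M *ᵥ x := by
  have hsplit : x ⬝ᵥ M *ᵥ x = x ⬝ᵥ blockMask r M *ᵥ x +
      ∑ k, ∑ l, if r k = r l then 0 else x k * M k l * x l := by
    simp only [dotProduct_mulVec_eq_sum, ← sum_add_distrib]
    refine sum_congr rfl fun k _ => sum_congr rfl fun l _ => ?_
    simp only [blockMask, of_apply]
    split_ifs <;> ring
  rw [hsplit, hM]
  exact add_nonneg (copositive_blockMask hA r x hx) (sum_nonneg fun k _ => sum_nonneg fun l _ => by
    split_ifs with h
    exacts [le_rfl, hoff k l h])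

end Blocks

section PosSemidef

variable {ι : Type*} [Fintype ι]

/-- The off-diagonal entries being nonpositive, `|x|ᵀ A |x| ≤ xᵀ A x`. -/
theorem Copositive.posSemidef_of_offDiag_nonpos {A : Matrix ι ι ℝ} (hs : A.IsSymm)
    (hA : Copositive A) (hoff : ∀ i j, i ≠ j → A i j ≤ 0) : A.PosSemidef := by
  refine .of_dotProduct_mulVec_nonneg (isHermitian_iff_isSymm.2 hs) fun x => ?_
  rw [star_trivial]
  refine (hA (fun i => |x i|) fun i => abs_nonneg _).trans ?_
  rw [dotProduct_mulVec_eq_sum, dotProduct_mulVec_eq_sum]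
  refine sum_le_sum fun k _ => sum_le_sum fun l _ => ?_
  rcases eq_or_ne k l with rfl | hkl
  · rw [mul_right_comm, abs_mul_abs_self, mul_right_comm]
  · have := mul_le_mul_of_nonpos_left (le_abs_self (x k * x l)) (hoff k l hkl)
    rw [abs_mul] at this
    linarith

theorem Copositive.posSemidef_of_mulVec_eq_zero {A : Matrix ι ι ℝ} (hs : A.IsSymm)
    (hA : Copositive A) {z : ι → ℝ} (hAz : A *ᵥ z = 0) (hz : ∀ i, 0 ≤ z i) {i₀ : ι}
    (hpos : ∀ i ≠ i₀, 0 < z i) : A.PosSemidef := by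
  refine .of_dotProduct_mulVec_nonneg (isHermitian_iff_isSymm.2 hs) fun x => ?_
  rw [star_trivial]
  have hshift : ∀ (y : ι → ℝ) (s : ℝ), (y + s • z) ⬝ᵥ A *ᵥ (y + s • z) = y ⬝ᵥ A *ᵥ y := by
    intro y s
    rw [mulVec_add, mulVec_smul, hAz, smul_zero, add_zero, add_dotProduct, smul_dotProduct,
      dotProduct_mulVec z, ← hs.eq, vecMul_transpose, hAz, zero_dotProduct, smul_zero, add_zero]
  have key : ∀ y : ι → ℝ, 0 ≤ y i₀ → 0 ≤ y ⬝ᵥ A *ᵥ y := by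
    intro y hy
    -- shifting by a large multiple of `z` makes `y` nonnegative without changing its value
    set s := ∑ i, |y i| / z i
    have hs0 : ∀ i, |y i| / z i ≤ s := fun i =>
      single_le_sum (fun j _ => div_nonneg (abs_nonneg _) (hz j)) (mem_univ i)
    rw [← hshift y s]
    refine hA _ fun i => ?_
    rcases eq_or_ne i i₀ with rfl | hi
    · exact add_nonneg hy (smul_nonneg ((div_nonneg (abs_nonneg _) (hz i)).trans (hs0 i)) (hz i))
    · have := (div_le_iff₀ (hpos i hi)).1 (hs0 i)
      have := neg_abs_le (y i)
      simp only [Pi.add_apply, Pi.smul_apply, smul_eq_mul]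
      linarith
  rcases le_total 0 (x i₀) with h | h
  · exact key x h
  · have := key (-x) (by simpa using h)
    rwa [mulVec_neg, dotProduct_neg, neg_dotProduct, neg_neg] at this

end PosSemidef

section Simplex

variable {ι : Type*} [Fintype ι]

theorem mulVec_apply_eq_of_isMinOn_stdSimplex {M : Matrix ι ι ℝ} (hs : M.IsSymm)
    {x : ι → ℝ} (hx : x ∈ stdSimplex ℝ ι) (hpos : ∀ i, 0 < x i)
    (hmin : IsMinOn (fun y => y ⬝ᵥ M *ᵥ y) (stdSimplex ℝ ι) x) (i j : ι) :
    (M *ᵥ x) i = (M *ᵥ x) j := by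
  classical
  set d : ι → ℝ := Pi.single i 1 - Pi.single j 1
  set a := d ⬝ᵥ M *ᵥ x
  set K := d ⬝ᵥ M *ᵥ d
  have ha : a = (M *ᵥ x) i - (M *ᵥ x) j := by simp [a, d, sub_dotProduct, single_dotProduct]
  have hline : ∀ t : ℝ,
      (x + t • d) ⬝ᵥ M *ᵥ (x + t • d) = x ⬝ᵥ M *ᵥ x + (2 * a * t + K * t ^ 2) := by
    intro t
    have hsym : x ⬝ᵥ M *ᵥ d = a := by
      rw [dotProduct_mulVec, ← hs.eq, vecMul_transpose, dotProduct_comm]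
    simp only [mulVec_add, mulVec_smul, dotProduct_add, add_dotProduct, dotProduct_smul,
      smul_dotProduct, smul_eq_mul, hsym]
    ring
  -- `x + t • d` stays in the simplex for small `t`, so `t = 0` is a critical point
  have hloc : IsLocalMin (fun t : ℝ => 2 * a * t + K * t ^ 2) 0 := by
    have hnhds : {t : ℝ | ∀ k, 0 < (x + t • d) k} ∈ 𝓝 0 := by
      refine IsOpen.mem_nhds ?_ (by simpa using hpos)
      simp only [Set.ofPred_forall]
      exact isOpen_iInter_of_finite fun k => isOpen_lt continuous_const (by fun_prop)
    filter_upwards [hnhds] with t ht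
    have hmem : x + t • d ∈ stdSimplex ℝ ι :=
      ⟨fun k => (ht k).le, by simp [sum_add_distrib, ← mul_sum, d, hx.2]⟩
    have := hmin hmem
    simp only [Set.mem_ofPred_eq, hline] at this
    simpa using this
  have hderiv : HasDerivAt (fun t : ℝ => 2 * a * t + K * t ^ 2) (2 * a) 0 :=
    (((hasDerivAt_id (0 : ℝ)).const_mul (2 * a)).add
      ((hasDerivAt_pow 2 (0 : ℝ)).const_mul K)).congr_deriv (by simp)
  have := hloc.hasDerivAt_eq_zero hderiv
  linarith

theorem exists_stdSimplex_mulVec_eq_const {M : Matrix ι ι ℝ} (hs : M.IsSymm)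
    (hM : ¬Copositive M) (hpos : ∀ x, (∀ i, 0 ≤ x i) → x ⬝ᵥ M *ᵥ x < 0 → ∀ i, 0 < x i) :
    ∃ x ∈ stdSimplex ℝ ι, ∃ μ < 0, M *ᵥ x = fun _ => μ := by
  obtain ⟨y, hy, hyneg⟩ : ∃ y ∈ stdSimplex ℝ ι, y ⬝ᵥ M *ᵥ y < 0 := by
    simpa [copositive_iff_stdSimplex] using hM
  obtain ⟨x, hx, hmin⟩ := (isCompact_stdSimplex ℝ ι).exists_isMinOn ⟨y, hy⟩
    (continuous_id.dotProduct (continuous_const.matrix_mulVec continuous_id)).continuousOn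
  have hneg : x ⬝ᵥ M *ᵥ x < 0 := (hmin hy).trans_lt hyneg
  have hMx := mulVec_apply_eq_of_isMinOn_stdSimplex hs hx (hpos x hx.1 hneg) hmin
  refine ⟨x, hx, _, hneg, funext fun i => ?_⟩
  simp only [dotProduct, hMx _ i, ← sum_mul, hx.2, one_mul]

theorem Copositive.exists_stdSimplex_mulVec_eq_zero {P : Matrix ι ι ℝ} (hP : Copositive P)
    {M : ℕ → Matrix ι ι ℝ} (hM : Tendsto M atTop (𝓝 P)) {x : ℕ → ι → ℝ}
    (hx : ∀ k, x k ∈ stdSimplex ℝ ι) {μ : ℕ → ℝ} (hμ : ∀ k, μ k ≤ 0)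
    (hMx : ∀ k, M k *ᵥ x k = fun _ => μ k) : ∃ z ∈ stdSimplex ℝ ι, P *ᵥ z = 0 := by
  obtain ⟨z, hz, φ, hφ, hxz⟩ := (isCompact_stdSimplex ℝ ι).tendsto_subseq hx
  have hlim : Tendsto (fun k => M (φ k) *ᵥ x (φ k)) atTop (𝓝 (P *ᵥ z)) :=
    ((continuous_fst.matrix_mulVec continuous_snd).tendsto (P, z)).comp
      ((hM.comp hφ.tendsto_atTop).prodMk_nhds hxz)
  have hcoord : ∀ i, Tendsto (fun k => μ (φ k)) atTop (𝓝 ((P *ᵥ z) i)) := fun i => by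
    simpa [hMx] using tendsto_pi_nhds.1 hlim i
  have hval : ∀ i, z ⬝ᵥ P *ᵥ z = (P *ᵥ z) i := fun i => by
    simp only [dotProduct, fun j => tendsto_nhds_unique (hcoord j) (hcoord i), ← sum_mul, hz.2,
      one_mul]
  refine ⟨z, hz, funext fun i => le_antisymm ?_ ?_⟩
  · exact le_of_tendsto' (hcoord i) fun k => hμ _
  · rw [Pi.zero_apply, ← hval]
    exact hP z hz.1

theorem exists_copositive_threshold {B E : Matrix ι ι ℝ} {c : ℝ} (hc : 0 ≤ c)
    (hBc : Copositive (B + c • E)) (hB : ¬Copositive B) :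
    ∃ d ∈ Set.Ioc 0 c, Copositive (B + d • E) ∧ ∀ t ∈ Set.Ico 0 d, ¬Copositive (B + t • E) := by
  set D := Set.Icc 0 c ∩ {t | Copositive (B + t • E)}
  have hD : IsClosed D := isClosed_Icc.inter (isClosed_setOf_copositive.preimage
    (continuous_const.add (continuous_id.smul continuous_const)))
  have hbdd : BddBelow D := ⟨0, fun t ht => ht.1.1⟩
  obtain ⟨⟨hd0, hdc⟩, hdcop⟩ := hD.csInf_mem ⟨c, ⟨hc, le_rfl⟩, hBc⟩ hbdd
  refine ⟨sInf D, ⟨hd0.lt_of_ne ?_, hdc⟩, hdcop, fun t ht hcop =>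
    notMem_of_lt_csInf ht.2 hbdd ⟨⟨ht.1, ht.2.le.trans hdc⟩, hcop⟩⟩
  rintro h
  exact hB (by simpa [← h] using hdcop)

theorem exists_stdSimplex_mulVec_eq_zero_of_threshold {B E : Matrix ι ι ℝ} (hBs : B.IsSymm)
    (hEs : E.IsSymm) {d : ℝ} (hd : 0 < d) (hcop : Copositive (B + d • E))
    (hlt : ∀ t ∈ Set.Ico 0 d, ¬Copositive (B + t • E))
    (hpos : ∀ t ∈ Set.Ico 0 d, ∀ x, (∀ i, 0 ≤ x i) → x ⬝ᵥ (B + t • E) *ᵥ x < 0 → ∀ i, 0 < x i) :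
    ∃ z ∈ stdSimplex ℝ ι, (B + d • E) *ᵥ z = 0 := by
  obtain ⟨u, -, hu, hlim⟩ := exists_seq_strictMono_tendsto' hd
  have hu' : ∀ k, u k ∈ Set.Ico 0 d := fun k => ⟨(hu k).1.le, (hu k).2⟩
  choose x hx μ hμ hMx using fun k =>
    exists_stdSimplex_mulVec_eq_const (hBs.add (hEs.smul (u k))) (hlt _ (hu' k)) (hpos _ (hu' k))
  exact hcop.exists_stdSimplex_mulVec_eq_zero (tendsto_const_nhds.add (hlim.smul_const E)) hx
    (fun k => (hμ k).le) hMx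

end Simplex

section Path

open SimpleGraph (pathGraph pathGraph_adj)

variable {n : ℕ}

theorem Fin.card_filter_lt_of_val_succ (p : Fin n → Prop) [DecidablePred p] {k l : Fin n}
    (hkl : k.val + 1 = l.val) :
    #{t | t < l ∧ p t} = #{t | t < k ∧ p t} + if p k then 1 else 0 := by
  have hsplit : univ.filter (fun t => t < l ∧ p t) =
      univ.filter (fun t => t < k ∧ p t) ∪ univ.filter (fun t => t = k ∧ p t) := by
    ext t
    simp only [mem_filter, mem_univ, true_and, mem_union, Fin.lt_def, Fin.ext_iff]
    constructor
    · rintro ⟨h, ht⟩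
      rcases Nat.lt_or_ge t.val k.val with h' | h'
      exacts [Or.inl ⟨h', ht⟩, Or.inr ⟨by omega, ht⟩]
    · rintro (⟨h, ht⟩ | ⟨h, ht⟩) <;> exact ⟨by omega, ht⟩
  rw [hsplit, card_union_of_disjoint (disjoint_filter.2 fun t _ h1 h2 => h1.1.ne h2.1)]
  split_ifs with hk <;> simp [Finset.filter_and, Finset.filter_eq', hk]

open Classical in
noncomputable def positiveEdgeCount (B : Matrix (Fin n) (Fin n) ℝ) (k : Fin n) : ℕ :=
  #{t | t < k ∧ ∃ l : Fin n, t.val + 1 = l.val ∧ 0 < B t l}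

theorem positiveEdgeCount_eq_iff {B : Matrix (Fin n) (Fin n) ℝ} {k l : Fin n}
    (hkl : k.val + 1 = l.val) : positiveEdgeCount B k = positiveEdgeCount B l ↔ B k l ≤ 0 := by
  have hk : (∃ l' : Fin n, k.val + 1 = l'.val ∧ 0 < B k l') ↔ 0 < B k l :=
    ⟨fun ⟨l', h, hB⟩ => by rwa [show l = l' from Fin.ext (hkl.symm.trans h)], fun h => ⟨l, hkl, h⟩⟩
  classical
  rw [positiveEdgeCount, positiveEdgeCount, Fin.card_filter_lt_of_val_succ _ hkl]
  split_ifs with h <;> simp_all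

/-- Cutting the path at its positive edges leaves copositive `Z`-matrix blocks. -/
theorem Copositive.isSPN_of_pathGraph {B : Matrix (Fin n) (Fin n) ℝ} (hs : B.IsSymm)
    (hc : Copositive B) (hB : ∀ k l, k ≠ l → B k l ≠ 0 → (pathGraph n).Adj k l) : IsSPN B := by
  set r := positiveEdgeCount B
  have hsame : ∀ k l, k ≠ l → r k = r l → B k l ≤ 0 := by
    intro k l hkl hr
    by_contra! hpos
    rcases pathGraph_adj.1 (hB k l hkl hpos.ne') with h | h
    · exact ((positiveEdgeCount_eq_iff h).1 hr).not_gt hpos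
    · rw [← hs.apply] at hpos
      exact ((positiveEdgeCount_eq_iff h).1 hr.symm).not_gt hpos
  have hdiff : ∀ k l, r k ≠ r l → 0 ≤ B k l := by
    intro k l hr
    by_contra! hneg
    rcases pathGraph_adj.1 (hB k l (by rintro rfl; exact hr rfl) hneg.ne) with h | h
    · exact hr ((positiveEdgeCount_eq_iff h).2 hneg.le)
    · rw [← hs.apply] at hneg
      exact hr ((positiveEdgeCount_eq_iff h).2 hneg.le).symm
  have hP : (blockMask r B).PosSemidef :=
    (copositive_blockMask hc r).posSemidef_of_offDiag_nonpos (hs.blockMask r) fun k l hkl => by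
      simp only [blockMask, of_apply]
      split_ifs with hr
      exacts [hsame k l hkl hr, le_rfl]
  have hN : ∀ k l, 0 ≤ (B - blockMask r B) k l := fun k l => by
    simp only [Matrix.sub_apply, blockMask, of_apply]
    split_ifs with hr
    exacts [(sub_self _).ge, by simpa using hdiff k l hr]
  simpa using hP.isSPN.add_nonneg (hs.sub (hs.blockMask r)) hN

end Path

section Cycle

open SimpleGraph (pathGraph pathGraph_adj)

variable {m : ℕ}

def closingEdgeMatrix (m : ℕ) : Matrix (Fin (m + 1)) (Fin (m + 1)) ℝ :=
  of fun k l => if s(k, l) = s(0, Fin.last m) then 1 else 0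

theorem closingEdgeMatrix_isSymm : (closingEdgeMatrix m).IsSymm := by
  ext k l
  simp only [closingEdgeMatrix, transpose_apply, of_apply, Sym2.eq_swap]

theorem closingEdgeMatrix_nonneg (k l : Fin (m + 1)) : 0 ≤ closingEdgeMatrix m k l := by
  simp only [closingEdgeMatrix, of_apply]
  split_ifs <;> norm_num

theorem blockMask_add_smul_closingEdgeMatrix {α : Type*} [DecidableEq α] {r : Fin (m + 1) → α}
    (hr : r 0 ≠ r (Fin.last m)) (B : Matrix (Fin (m + 1)) (Fin (m + 1)) ℝ) (d : ℝ) :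
    blockMask r (B + d • closingEdgeMatrix m) = blockMask r B := by
  ext k l
  simp only [blockMask, closingEdgeMatrix, of_apply, Matrix.add_apply, Matrix.smul_apply,
    smul_eq_mul]
  split_ifs with hkl hE
  · rcases Sym2.eq_iff.1 hE with ⟨rfl, rfl⟩ | ⟨rfl, rfl⟩
    exacts [absurd hkl hr, absurd hkl.symm hr]
  · simp
  · rfl

theorem add_smul_closingEdgeMatrix_apply {B : Matrix (Fin (m + 1)) (Fin (m + 1)) ℝ} {d : ℝ}
    {k l : Fin (m + 1)} (h : s(k, l) ≠ s(0, Fin.last m)) :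
    (B + d • closingEdgeMatrix m) k l = B k l := by
  simp only [Matrix.add_apply, Matrix.smul_apply, closingEdgeMatrix, of_apply, if_neg h,
    smul_zero, add_zero]

theorem Fin.forall_of_pathGraph_interior {S : Fin (m + 1) → Prop}
    (hS : ∀ k l, 0 < k.val → k.val < m → (pathGraph (m + 1)).Adj k l → S k → S l)
    {i : Fin (m + 1)} (hi₀ : 0 < i.val) (him : i.val < m) (hi : S i) (j : Fin (m + 1)) : S j := by
  have hstep : ∀ t (ht : t < m), 0 < t → S ⟨t, by omega⟩ →
      S ⟨t + 1, by omega⟩ ∧ ∀ ht' : 0 < t, S ⟨t - 1, by omega⟩ := by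
    intro t ht ht0 hSt
    exact ⟨hS _ _ ht0 ht (pathGraph_adj.2 (Or.inl rfl)) hSt, fun _ =>
      hS _ _ ht0 ht (pathGraph_adj.2 (Or.inr (by simp; omega))) hSt⟩
  have up : ∀ t, i.val ≤ t → ∀ ht : t ≤ m, S ⟨t, by omega⟩ := by
    intro t ht
    induction t, ht using Nat.le_induction with
    | base => exact fun _ => hi
    | succ t ht ih => exact fun h => (hstep t (by omega) (by omega) (ih (by omega))).1
  have down : ∀ s, s ≤ i.val → S ⟨i.val - s, by omega⟩ := by
    intro s
    induction s with
    | zero => exact fun _ => hi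
    | succ s ih =>
      intro hs
      have := (hstep (i.val - s) (by omega) (by omega) (ih (by omega))).2 (by omega)
      simpa [Nat.sub_sub] using this
  rcases le_total i j with h | h
  · exact up j.val h (by omega)
  · simpa [Nat.sub_sub_self h] using down (i.val - j.val) (by omega)

variable {B : Matrix (Fin (m + 1)) (Fin (m + 1)) ℝ}
  (hB : ∀ k l, k ≠ l → B k l ≠ 0 → (pathGraph (m + 1)).Adj k l)
include hB

theorem copositive_of_pathEdge_nonneg (hs : B.IsSymm) {c : ℝ}
    (hA : Copositive (B + c • closingEdgeMatrix m)) {j l : Fin (m + 1)} (hjl : j.val + 1 = l.val)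
    (hBjl : 0 ≤ B j l) : Copositive B := by
  intro x hx
  have hr : decide ((0 : Fin (m + 1)) ≤ j) ≠ decide (Fin.last m ≤ j) := by
    simp only [Fin.le_def, Fin.val_zero, Fin.val_last, ne_eq, decide_eq_decide]
    omega
  refine hA.dotProduct_mulVec_nonneg_of_blockMask_eq
    (blockMask_add_smul_closingEdgeMatrix (r := fun k => decide (k ≤ j)) hr B c).symm hx
    fun k k' hkk' => ?_
  rcases eq_or_ne (B k k') 0 with h0 | h0
  · simp [h0]
  simp only [ne_eq, decide_eq_decide, Fin.le_def] at hkk'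
  -- an edge between the two sides of the cut after `j` is the edge `{j, l}`
  rcases pathGraph_adj.1 (hB k k' (by rintro rfl; exact hkk' Iff.rfl) h0) with h | h
  · obtain ⟨rfl, rfl⟩ : k = j ∧ k' = l := by simp only [Fin.ext_iff]; omega
    exact mul_nonneg (mul_nonneg (hx _) hBjl) (hx _)
  · obtain ⟨rfl, rfl⟩ : k' = j ∧ k = l := by simp only [Fin.ext_iff]; omega
    rw [← hs.apply] at hBjl
    exact mul_nonneg (mul_nonneg (hx _) hBjl) (hx _)

theorem pos_of_dotProduct_mulVec_neg (hm : 1 ≤ m) {c : ℝ}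
    (hA : Copositive (B + c • closingEdgeMatrix m)) {d : ℝ} (hd : 0 ≤ d) {x : Fin (m + 1) → ℝ}
    (hx : ∀ i, 0 ≤ x i) (hneg : x ⬝ᵥ (B + d • closingEdgeMatrix m) *ᵥ x < 0) (i : Fin (m + 1)) :
    0 < x i := by
  refine (hx i).lt_of_ne fun hxi => hneg.not_ge ?_
  -- blocks `{k < i}`, `{i}`, `{k > i}`
  let r : Fin (m + 1) → Bool × Bool := fun k => (decide (k < i), decide (i < k))
  have hr : r 0 ≠ r (Fin.last m) := by
    simp only [r, ne_eq, Prod.mk.injEq, decide_eq_decide]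
    simp only [Fin.lt_def, Fin.val_zero, Fin.val_last]
    omega
  refine hA.dotProduct_mulVec_nonneg_of_blockMask_eq (by
    rw [blockMask_add_smul_closingEdgeMatrix hr, blockMask_add_smul_closingEdgeMatrix hr]) hx
    fun k l hkl => ?_
  rcases eq_or_ne k i with rfl | hk
  · simp [← hxi]
  rcases eq_or_ne l i with rfl | hl
  · simp [← hxi]
  have hBkl : B k l = 0 := by
    by_contra h0
    have := pathGraph_adj.1 (hB k l (by rintro rfl; exact hkl rfl) h0)
    simp only [r, ne_eq, Prod.mk.injEq, decide_eq_decide] at hkl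
    simp only [Fin.lt_def] at hkl
    simp only [ne_eq, Fin.ext_iff] at hk hl
    omega
  simp only [Matrix.add_apply, Matrix.smul_apply, hBkl, zero_add, smul_eq_mul]
  exact mul_nonneg (mul_nonneg (hx k) (mul_nonneg hd (closingEdgeMatrix_nonneg k l))) (hx l)

theorem offDiag_nonpos_of_pathGraph_adj_neg
    (hneg : ∀ k l, (pathGraph (m + 1)).Adj k l → B k l < 0) {k l : Fin (m + 1)} (hkl : k ≠ l) :
    B k l ≤ 0 := by
  by_contra! hpos
  exact (hneg k l (hB k l hkl hpos.ne')).not_gt hpos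

theorem eq_zero_or_eq_last_of_mulVec_eq_zero
    (hneg : ∀ k l, (pathGraph (m + 1)).Adj k l → B k l < 0) {d : ℝ} {z : Fin (m + 1) → ℝ}
    (hz : z ∈ stdSimplex ℝ (Fin (m + 1))) (hPz : (B + d • closingEdgeMatrix m) *ᵥ z = 0)
    {i : Fin (m + 1)} (hzi : z i = 0) : i = 0 ∨ i = Fin.last m := by
  have hinterior : ∀ k l : Fin (m + 1), 0 < k.val → k.val < m → (pathGraph (m + 1)).Adj k l →
      z k = 0 → z l = 0 := by
    intro k l hk₀ hkm hkl hzk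
    have hk : ∀ j, s(k, j) ≠ s(0, Fin.last m) := fun j => by
      simp only [ne_eq, Sym2.eq_iff, Fin.ext_iff, Fin.val_zero, Fin.val_last]
      omega
    refine eq_zero_of_mulVec_apply_eq_zero (congrFun hPz k) (fun j => ?_)
      (by rw [add_smul_closingEdgeMatrix_apply (hk l)]; exact hneg k l hkl)
    rcases eq_or_ne k j with rfl | hkj
    · simp [hzk]
    · rw [add_smul_closingEdgeMatrix_apply (hk j)]
      exact mul_nonpos_of_nonpos_of_nonneg (offDiag_nonpos_of_pathGraph_adj_neg hB hneg hkj)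
        (hz.1 j)
  by_contra! hi
  rw [Ne, Fin.ext_iff, Ne, Fin.ext_iff, Fin.val_zero, Fin.val_last] at hi
  have h0 := Fin.forall_of_pathGraph_interior hinterior (i := i) (by omega) (by omega) hzi
  simpa [h0] using hz.2

theorem exists_forall_ne_pos_of_mulVec_eq_zero (hm : 2 ≤ m)
    (hneg : ∀ k l, (pathGraph (m + 1)).Adj k l → B k l < 0) {d : ℝ} {z : Fin (m + 1) → ℝ}
    (hz : z ∈ stdSimplex ℝ (Fin (m + 1))) (hPz : (B + d • closingEdgeMatrix m) *ᵥ z = 0) :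
    ∃ i₀, ∀ i ≠ i₀, 0 < z i := by
  have hall := fun i => eq_zero_or_eq_last_of_mulVec_eq_zero hB hneg hz hPz (i := i)
  -- otherwise row `0` would force the interior zero `z 1 = 0`
  have hends : ¬(z 0 = 0 ∧ z (Fin.last m) = 0) := by
    rintro ⟨h0, hlast⟩
    let one : Fin (m + 1) := ⟨1, by omega⟩
    have hE : s(0, one) ≠ s(0, Fin.last m) := by
      simp only [ne_eq, Sym2.eq_iff, Fin.ext_iff, Fin.val_zero, Fin.val_last, one]
      omega
    have := eq_zero_of_mulVec_apply_eq_zero (congrFun hPz 0) (fun j => ?_)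
      (by rw [add_smul_closingEdgeMatrix_apply hE]; exact hneg 0 one (pathGraph_adj.2 (Or.inl rfl)))
    · rcases hall one this with h | h <;>
        simp only [Fin.ext_iff, Fin.val_zero, Fin.val_last, one] at h <;> omega
    rcases eq_or_ne 0 j with rfl | h0j
    · simp [h0]
    by_cases hj : j = Fin.last m
    · simp [hj, hlast]
    rw [add_smul_closingEdgeMatrix_apply (by simpa [Sym2.eq_iff, Ne.symm h0j] using hj)]
    exact mul_nonpos_of_nonpos_of_nonneg (offDiag_nonpos_of_pathGraph_adj_neg hB hneg h0j) (hz.1 j)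
  refine ⟨if z 0 = 0 then 0 else Fin.last m, fun i hi => (hz.1 i).lt_of_ne' fun hzi => ?_⟩
  rcases hall i hzi with rfl | rfl
  · simp [hzi] at hi
  · split_ifs at hi with h0
    exacts [hends ⟨h0, hzi⟩, hi rfl]

theorem isSPN_add_smul_closingEdgeMatrix (hm : 2 ≤ m) (hs : B.IsSymm) {c : ℝ} (hc : 0 ≤ c)
    (hA : Copositive (B + c • closingEdgeMatrix m)) : IsSPN (B + c • closingEdgeMatrix m) := by
  suffices ∃ d ∈ Set.Icc 0 c, IsSPN (B + d • closingEdgeMatrix m) by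
    obtain ⟨d, ⟨-, hdc⟩, hd⟩ := this
    have := hd.add_nonneg (closingEdgeMatrix_isSymm.smul (c - d)) fun k l =>
      mul_nonneg (sub_nonneg.2 hdc) (closingEdgeMatrix_nonneg k l)
    rwa [add_assoc, ← add_smul, add_sub_cancel] at this
  by_cases hBc : Copositive B
  · exact ⟨0, ⟨le_rfl, hc⟩, by simpa using hBc.isSPN_of_pathGraph hs hB⟩
  have hneg : ∀ k l, (pathGraph (m + 1)).Adj k l → B k l < 0 := by
    intro k l hkl
    by_contra! h
    rcases pathGraph_adj.1 hkl with h' | h'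
    · exact hBc (copositive_of_pathEdge_nonneg hB hs hA h' h)
    · exact hBc (copositive_of_pathEdge_nonneg hB hs hA h' (by rwa [hs.apply]))
  obtain ⟨d, ⟨hd₀, hdc⟩, hdcop, hlt⟩ := exists_copositive_threshold hc hA hBc
  obtain ⟨z, hz, hPz⟩ := exists_stdSimplex_mulVec_eq_zero_of_threshold hs closingEdgeMatrix_isSymm
    hd₀ hdcop hlt fun t ht x hx hxneg => pos_of_dotProduct_mulVec_neg hB (by omega) hA ht.1 hx hxneg
  obtain ⟨i₀, hi₀⟩ := exists_forall_ne_pos_of_mulVec_eq_zero hB hm hneg hz hPz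
  exact ⟨d, ⟨hd₀.le, hdc⟩, (hdcop.posSemidef_of_mulVec_eq_zero
    (hs.add (closingEdgeMatrix_isSymm.smul d)) hPz hz.1 hi₀).isSPN⟩

end Cycle

section CycleGraph

open SimpleGraph (pathGraph pathGraph_adj)

variable {m : ℕ}

theorem cycleGraph_adj_iff {k l : Fin (m + 1)} :
    (cycleGraph (m + 1)).Adj k l ↔ k ≠ l ∧ (k + 1 = l ∨ l + 1 = k) := by
  simp only [cycleGraph, Fin.ext_iff, Fin.val_add, Fin.val_one', Nat.add_mod_mod]

theorem cycleGraph_adj_add_right {k l : Fin (m + 1)} (r : Fin (m + 1)) :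
    (cycleGraph (m + 1)).Adj (k + r) (l + r) ↔ (cycleGraph (m + 1)).Adj k l := by
  simp only [cycleGraph_adj_iff, ne_eq, add_left_inj, add_right_comm _ r 1]

theorem pathGraph_adj_or_eq_of_cycleGraph_adj {k l : Fin (m + 1)}
    (h : (cycleGraph (m + 1)).Adj k l) :
    (pathGraph (m + 1)).Adj k l ∨ s(k, l) = s(0, Fin.last m) := by
  have key : ∀ k l : Fin (m + 1), (k.val + 1) % (m + 1) = l.val →
      k.val + 1 = l.val ∨ (k = Fin.last m ∧ l = 0) := fun k l h => by
    rcases Nat.lt_or_ge (k.val + 1) (m + 1) with hk | hk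
    · exact Or.inl (by rwa [Nat.mod_eq_of_lt hk] at h)
    · obtain rfl : k = Fin.last m := Fin.ext (by simp; omega)
      rw [Fin.val_last, Nat.mod_self] at h
      exact Or.inr ⟨rfl, Fin.ext h.symm⟩
  rw [pathGraph_adj, Sym2.eq_iff]
  rcases h.2 with h | h <;> rcases key _ _ h with h | h <;> tauto

theorem isSPN_of_cycleGraph_adj_of_closingEdge_pos (hm : 2 ≤ m)
    {A : Matrix (Fin (m + 1)) (Fin (m + 1)) ℝ} (hs : A.IsSymm) (hc : Copositive A)
    (hA : ∀ i j, i ≠ j → A i j ≠ 0 → (cycleGraph (m + 1)).Adj i j)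
    (hpos : 0 < A (Fin.last m) 0) : IsSPN A := by
  set c := A (Fin.last m) 0
  have hB : ∀ k l, k ≠ l → (A - c • closingEdgeMatrix m) k l ≠ 0 → (pathGraph (m + 1)).Adj k l := by
    intro k l hkl h0
    by_cases hE : s(k, l) = s(0, Fin.last m)
    · refine absurd ?_ h0
      simp only [Matrix.sub_apply, Matrix.smul_apply, closingEdgeMatrix, of_apply, if_pos hE,
        smul_eq_mul, mul_one, c, sub_eq_zero]
      rcases Sym2.eq_iff.1 hE with ⟨rfl, rfl⟩ | ⟨rfl, rfl⟩
      exacts [hs.apply _ _, rfl]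
    have hAkl : A k l ≠ 0 := by
      simpa only [Matrix.sub_apply, Matrix.smul_apply, closingEdgeMatrix, of_apply, if_neg hE,
        smul_zero, sub_zero] using h0
    exact (pathGraph_adj_or_eq_of_cycleGraph_adj (hA k l hkl hAkl)).resolve_right hE
  have := isSPN_add_smul_closingEdgeMatrix hB hm (hs.sub (closingEdgeMatrix_isSymm.smul c))
    hpos.le (by rwa [sub_add_cancel])
  rwa [sub_add_cancel] at this

theorem isSPN_of_cycleGraph_adj (hm : 2 ≤ m) {A : Matrix (Fin (m + 1)) (Fin (m + 1)) ℝ}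
    (hs : A.IsSymm) (hc : Copositive A)
    (hA : ∀ i j, i ≠ j → A i j ≠ 0 → (cycleGraph (m + 1)).Adj i j) : IsSPN A := by
  by_cases hoff : ∀ i j, i ≠ j → A i j ≤ 0
  · exact (hc.posSemidef_of_offDiag_nonpos hs hoff).isSPN
  push Not at hoff
  obtain ⟨i, j, hij, hpos⟩ := hoff
  obtain ⟨p, hp⟩ : ∃ p, 0 < A p (p + 1) := by
    rcases (cycleGraph_adj_iff.1 (hA i j hij hpos.ne')).2 with rfl | rfl
    · exact ⟨i, hpos⟩
    · exact ⟨j, by rwa [hs.apply]⟩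
  -- rotate the positive edge `(p, p + 1)` to the closing edge `(m, 0)`
  let σ := Equiv.addRight (p + 1)
  have hlast : Fin.last m + (p + 1) = p := by
    rw [add_comm p 1, ← add_assoc, Fin.last_add_one, zero_add]
  have := isSPN_of_cycleGraph_adj_of_closingEdge_pos hm (hs.submatrix σ) (hc.submatrix σ)
    (fun k l hkl h => (cycleGraph_adj_add_right _).1 (hA _ _ (σ.injective.ne hkl) h))
    (show 0 < A (Fin.last m + (p + 1)) (0 + (p + 1)) by rwa [hlast, zero_add])
  simpa using this.submatrix σ.symm

end CycleGraph

/-- For every `n ≥ 3`, the cycle `C_n` on `n` vertices is an SPN graph. -/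
theorem isSPNGraph_cycleGraph (n : ℕ) (hn : 3 ≤ n) :
    IsSPNGraph (cycleGraph n) := by
  obtain ⟨m, rfl⟩ : ∃ m, n = m + 1 := ⟨n - 1, by omega⟩
  exact isSPNGraph_of_forall fun A hs hc hA => isSPN_of_cycleGraph_adj (by omega) hs hc hA
end
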